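/- arXiv:1802.02457 — 3 statements merged into one kernel-verified Lean document; each statement's English description precedes it below -/
import Mathlib

section
/- Fix relatively prime positive integers p, q and let h be the 2×2 real matrix with rows (1, 0) and (−q/p, 1/p). For (ρ,z) with ρ > 0 set r = √(ρ² + z²) and define the symmetric 2×2 matrix F_lens = h · diag((r − z)/2, (r + z)/2) · hᵗ. Then each entry of F_lens, viewed as a function on the half-plane {ρ > 0}, is C^∞, F_lens is invertible there, and F_lens satisfies the static harmonic map equation ∂²F/∂ρ² + (1/ρ)∂F/∂ρ + ∂²F/∂z² = (∂F/∂ρ) F⁻¹ (∂F/∂ρ) + (∂F/∂z) F⁻¹ (∂F/∂z) at every point with ρ > 0. -/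
open Matrix

/-- The change-of-basis matrix `h` with rows `(1, 0)` and `(−q/p, 1/p)`. -/
noncomputable def hLens (p q : ℕ) : Matrix (Fin 2) (Fin 2) ℝ :=
  !![1, 0; -(q : ℝ) / (p : ℝ), 1 / (p : ℝ)]

/-- The lens model matrix `F_lens = h · diag((r − z)/2, (r + z)/2) · hᵗ`, `r = √(ρ² + z²)`. -/
noncomputable def FLens (p q : ℕ) (ρ z : ℝ) : Matrix (Fin 2) (Fin 2) ℝ :=
  hLens p q *
    Matrix.diagonal ![(Real.sqrt (ρ ^ 2 + z ^ 2) - z) / 2, (Real.sqrt (ρ ^ 2 + z ^ 2) + z) / 2] *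
    (hLens p q)ᵀ

/-- Entrywise partial derivative in `ρ` of a matrix-valued function of `(ρ, z)`. -/
noncomputable def pdRhoM (F : ℝ → ℝ → Matrix (Fin 2) (Fin 2) ℝ) (ρ z : ℝ) :
    Matrix (Fin 2) (Fin 2) ℝ :=
  Matrix.of fun i j => deriv (fun ρ' => F ρ' z i j) ρ

/-- Entrywise partial derivative in `z` of a matrix-valued function of `(ρ, z)`. -/
noncomputable def pdZM (F : ℝ → ℝ → Matrix (Fin 2) (Fin 2) ℝ) (ρ z : ℝ) :
    Matrix (Fin 2) (Fin 2) ℝ :=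
  Matrix.of fun i j => deriv (fun z' => F ρ z' i j) z


noncomputable def Gm (p q : ℕ) (x y : ℝ) : Matrix (Fin 2) (Fin 2) ℝ :=
  hLens p q * Matrix.diagonal ![x, y] * (hLens p q)ᵀ

lemma Gm_eq (p q : ℕ) (x y : ℝ) :
    Gm p q x y = !![x, (-(q:ℝ)/p) * x; (-(q:ℝ)/p) * x,
      (-(q:ℝ)/p)^2 * x + (1/(p:ℝ))^2 * y] := by
  ext i j
  fin_cases i <;> fin_cases j <;>
    simp [Gm, hLens, Matrix.mul_apply, Matrix.vecMul_diagonal, Fin.sum_univ_two, Matrix.vecHead, Matrix.vecTail] <;> ring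

lemma Gm_entry (p q : ℕ) (x y : ℝ) (i j : Fin 2) :
    Gm p q x y i j = x * Gm p q 1 0 i j + y * Gm p q 0 1 i j := by
  rw [Gm_eq, Gm_eq, Gm_eq]
  fin_cases i <;> fin_cases j <;> simp <;> ring

lemma Gm_add (p q : ℕ) (x y x' y' : ℝ) :
    Gm p q x y + Gm p q x' y' = Gm p q (x + x') (y + y') := by
  rw [Gm_eq, Gm_eq, Gm_eq]
  ext i j
  fin_cases i <;> fin_cases j <;> simp <;> ring

lemma Gm_smul (p q : ℕ) (c x y : ℝ) :
    c • Gm p q x y = Gm p q (c * x) (c * y) := by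
  rw [Gm_eq, Gm_eq]
  ext i j
  fin_cases i <;> fin_cases j <;> simp [Matrix.smul_apply] <;> ring

lemma aux_mul {M : Type*} [Monoid M] (h d h' j' e j : M)
    (h1 : h' * j' = 1) (h2 : d * e = 1) (h3 : h * j = 1) :
    h * d * h' * (j' * e * j) = 1 := by
  simp only [mul_assoc]
  rw [← mul_assoc h' j', h1, one_mul, ← mul_assoc d e, h2, one_mul, h3]

lemma aux_mul3 {M : Type*} [Monoid M] (h d1 h' j' e j d2 : M)
    (h1 : h' * j' = 1) (h2 : j * h = 1) :
    h * d1 * h' * (j' * e * j) * (h * d2 * h') = h * (d1 * e * d2) * h' := by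
  simp only [mul_assoc]
  rw [← mul_assoc h' j', h1, one_mul, ← mul_assoc j h, h2, one_mul]

noncomputable def Jm (p q : ℕ) : Matrix (Fin 2) (Fin 2) ℝ :=
  !![1, 0; (q : ℝ), (p : ℝ)]

lemma Jm_mul_hLens (p q : ℕ) (hp : (p : ℝ) ≠ 0) : Jm p q * hLens p q = 1 := by
  ext i j
  fin_cases i <;> fin_cases j <;>
    simp [Jm, hLens, Matrix.mul_apply, Fin.sum_univ_two, Matrix.one_apply] <;>
    field_simp <;> ring

lemma hLens_mul_Jm (p q : ℕ) (hp : (p : ℝ) ≠ 0) : hLens p q * Jm p q = 1 := by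
  rw [mul_eq_one_comm]; exact Jm_mul_hLens p q hp

lemma diag_mul_inv_diag (a b : ℝ) (ha : a ≠ 0) (hb : b ≠ 0) :
    Matrix.diagonal ![a, b] * Matrix.diagonal ![a⁻¹, b⁻¹] = 1 := by
  rw [Matrix.diagonal_mul_diagonal]
  rw [show (fun i => ![a, b] i * ![a⁻¹, b⁻¹] i) = (1 : Fin 2 → ℝ) from
    funext fun i => by fin_cases i <;> simp [ha, hb]]
  exact Matrix.diagonal_one

lemma Gm_inv (p q : ℕ) (hp : (p : ℝ) ≠ 0) (a b : ℝ) (ha : a ≠ 0) (hb : b ≠ 0) :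
    (Gm p q a b)⁻¹ = (Jm p q)ᵀ * Matrix.diagonal ![a⁻¹, b⁻¹] * Jm p q := by
  apply Matrix.inv_eq_right_inv
  refine aux_mul _ _ _ _ _ _ ?_ (diag_mul_inv_diag a b ha hb) (hLens_mul_Jm p q hp)
  rw [← Matrix.transpose_mul, Jm_mul_hLens p q hp, Matrix.transpose_one]

lemma Gm_mul_inv_mul (p q : ℕ) (hp : (p : ℝ) ≠ 0) (a b x y x' y' : ℝ)
    (ha : a ≠ 0) (hb : b ≠ 0) :
    Gm p q x y * (Gm p q a b)⁻¹ * Gm p q x' y' = Gm p q (x * x' / a) (y * y' / b) := by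
  rw [Gm_inv p q hp a b ha hb]
  show hLens p q * Matrix.diagonal ![x, y] * (hLens p q)ᵀ *
      ((Jm p q)ᵀ * Matrix.diagonal ![a⁻¹, b⁻¹] * Jm p q) *
      (hLens p q * Matrix.diagonal ![x', y'] * (hLens p q)ᵀ) = _
  rw [aux_mul3 _ _ _ _ _ _ _
    (by rw [← Matrix.transpose_mul, Jm_mul_hLens p q hp, Matrix.transpose_one])
    (Jm_mul_hLens p q hp)]
  rw [Matrix.diagonal_mul_diagonal, Matrix.diagonal_mul_diagonal]
  show Gm p q _ _ = _
  congr 1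
  all_goals (simp <;> ring)

lemma hdSqrt (c x : ℝ) (hc : 0 ≤ c) (h : x ^ 2 + c ≠ 0) :
    HasDerivAt (fun t => Real.sqrt (t ^ 2 + c)) (x / Real.sqrt (x ^ 2 + c)) x := by
  have hpos : 0 < x ^ 2 + c := lt_of_le_of_ne (by positivity) (Ne.symm h)
  have hs : Real.sqrt (x ^ 2 + c) ≠ 0 := (Real.sqrt_pos.mpr hpos).ne'
  have h1 : HasDerivAt (fun t : ℝ => t ^ 2 + c) (2 * x) x := by
    simpa using (hasDerivAt_pow 2 x).add_const c
  have := h1.sqrt h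
  convert this using 1
  field_simp

lemma hdHalf (c x : ℝ) (hc : 0 ≤ c) (h : x ^ 2 + c ≠ 0) :
    HasDerivAt (fun t => t / (2 * Real.sqrt (t ^ 2 + c)))
      (c / (2 * Real.sqrt (x ^ 2 + c) ^ 3)) x := by
  have hpos : 0 < x ^ 2 + c := lt_of_le_of_ne (by positivity) (Ne.symm h)
  have hsp : 0 < Real.sqrt (x ^ 2 + c) := Real.sqrt_pos.mpr hpos
  have hsq : Real.sqrt (x ^ 2 + c) ^ 2 = x ^ 2 + c := Real.sq_sqrt hpos.le
  have hd : HasDerivAt (fun t => t / (2 * Real.sqrt (t ^ 2 + c))) _ x := (hasDerivAt_id x).div ((hdSqrt c x hc h).const_mul 2) (by positivity)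
  convert hd using 1
  have hN : (1:ℝ) * (2 * Real.sqrt (x ^ 2 + c)) - id x * (2 * (x / Real.sqrt (x ^ 2 + c)))
      = 2 * c / Real.sqrt (x ^ 2 + c) := by
    field_simp
    simp only [id_eq]; linear_combination hsq
  rw [hN]
  field_simp

lemma FLens_eq (p q : ℕ) (ρ z : ℝ) :
    FLens p q ρ z = Gm p q ((Real.sqrt (ρ ^ 2 + z ^ 2) - z) / 2)
      ((Real.sqrt (ρ ^ 2 + z ^ 2) + z) / 2) := rfl

lemma pdRho_FLens (p q : ℕ) (ρ z : ℝ) (h : ρ ^ 2 + z ^ 2 ≠ 0) :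
    pdRhoM (FLens p q) ρ z =
      Gm p q (ρ / (2 * Real.sqrt (ρ ^ 2 + z ^ 2))) (ρ / (2 * Real.sqrt (ρ ^ 2 + z ^ 2))) := by
  have hpos : 0 < ρ ^ 2 + z ^ 2 := lt_of_le_of_ne (by positivity) (Ne.symm h)
  have hs : Real.sqrt (ρ ^ 2 + z ^ 2) ≠ 0 := (Real.sqrt_pos.mpr hpos).ne'
  ext i j
  simp only [pdRhoM, Matrix.of_apply]
  have hfun : (fun ρ' => FLens p q ρ' z i j)
      = fun ρ' => ((Real.sqrt (ρ' ^ 2 + z ^ 2) - z) / 2) * Gm p q 1 0 i j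
          + ((Real.sqrt (ρ' ^ 2 + z ^ 2) + z) / 2) * Gm p q 0 1 i j := by
    funext ρ'
    rw [FLens_eq, Gm_entry]
  rw [hfun]
  have hd := ((((hdSqrt (z ^ 2) ρ (sq_nonneg z) h).sub_const z).div_const 2).mul_const
      (Gm p q 1 0 i j)).add
    ((((hdSqrt (z ^ 2) ρ (sq_nonneg z) h).add_const z).div_const 2).mul_const
      (Gm p q 0 1 i j))
  simp only [Pi.add_def, Pi.sub_def] at hd
  rw [hd.deriv, Gm_entry p q (ρ / (2 * Real.sqrt (ρ ^ 2 + z ^ 2)))]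
  ring

lemma pdZ_FLens (p q : ℕ) (ρ z : ℝ) (h : ρ ^ 2 + z ^ 2 ≠ 0) :
    pdZM (FLens p q) ρ z =
      Gm p q (z / (2 * Real.sqrt (ρ ^ 2 + z ^ 2)) - 1 / 2)
        (z / (2 * Real.sqrt (ρ ^ 2 + z ^ 2)) + 1 / 2) := by
  have hpos : 0 < ρ ^ 2 + z ^ 2 := lt_of_le_of_ne (by positivity) (Ne.symm h)
  have hs : Real.sqrt (ρ ^ 2 + z ^ 2) ≠ 0 := (Real.sqrt_pos.mpr hpos).ne'
  have h' : z ^ 2 + ρ ^ 2 ≠ 0 := by rwa [add_comm]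
  ext i j
  simp only [pdZM, Matrix.of_apply]
  have hfun : (fun z' => FLens p q ρ z' i j)
      = fun z' => ((Real.sqrt (z' ^ 2 + ρ ^ 2) - z') / 2) * Gm p q 1 0 i j
          + ((Real.sqrt (z' ^ 2 + ρ ^ 2) + z') / 2) * Gm p q 0 1 i j := by
    funext z'
    rw [FLens_eq, Gm_entry, add_comm (ρ ^ 2)]
  rw [hfun]
  have hd := ((((hdSqrt (ρ ^ 2) z (sq_nonneg ρ) h').sub (hasDerivAt_id' z)).div_const 2).mul_const
      (Gm p q 1 0 i j)).add
    ((((hdSqrt (ρ ^ 2) z (sq_nonneg ρ) h').add (hasDerivAt_id' z)).div_const 2).mul_const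
      (Gm p q 0 1 i j))
  rw [add_comm (ρ ^ 2) (z ^ 2)]
  simp only [Pi.add_def, Pi.sub_def] at hd
  rw [hd.deriv, Gm_entry p q (z / (2 * Real.sqrt (z ^ 2 + ρ ^ 2)) - 1 / 2)]
  ring

lemma pdRhoRho_FLens (p q : ℕ) (ρ z : ℝ) (hρ : 0 < ρ) :
    pdRhoM (pdRhoM (FLens p q)) ρ z =
      Gm p q (z ^ 2 / (2 * Real.sqrt (ρ ^ 2 + z ^ 2) ^ 3))
        (z ^ 2 / (2 * Real.sqrt (ρ ^ 2 + z ^ 2) ^ 3)) := by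
  have h : ρ ^ 2 + z ^ 2 ≠ 0 := by positivity
  ext i j
  show deriv (fun ρ' => pdRhoM (FLens p q) ρ' z i j) ρ = _
  have hev : (fun ρ' => (pdRhoM (FLens p q) ρ' z) i j)
      =ᶠ[nhds ρ] fun ρ' => (ρ' / (2 * Real.sqrt (ρ' ^ 2 + z ^ 2))) * Gm p q 1 0 i j
          + (ρ' / (2 * Real.sqrt (ρ' ^ 2 + z ^ 2))) * Gm p q 0 1 i j := by
    filter_upwards [Ioi_mem_nhds hρ] with ρ' hρ'
    have hρ'0 : (0:ℝ) < ρ' := hρ'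
    rw [pdRho_FLens p q ρ' z (by positivity),
      Gm_entry p q (ρ' / (2 * Real.sqrt (ρ' ^ 2 + z ^ 2)))]
  rw [hev.deriv_eq]
  have hd := ((hdHalf (z ^ 2) ρ (sq_nonneg z) h).mul_const (Gm p q 1 0 i j)).add
    ((hdHalf (z ^ 2) ρ (sq_nonneg z) h).mul_const (Gm p q 0 1 i j))
  simp only [Pi.add_def, Pi.sub_def] at hd
  rw [hd.deriv, Gm_entry p q (z ^ 2 / (2 * Real.sqrt (ρ ^ 2 + z ^ 2) ^ 3))]


lemma pdZZ_FLens (p q : ℕ) (ρ z : ℝ) (hρ : 0 < ρ) :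
    pdZM (pdZM (FLens p q)) ρ z =
      Gm p q (ρ ^ 2 / (2 * Real.sqrt (ρ ^ 2 + z ^ 2) ^ 3))
        (ρ ^ 2 / (2 * Real.sqrt (ρ ^ 2 + z ^ 2) ^ 3)) := by
  ext i j
  show deriv (fun z' => pdZM (FLens p q) ρ z' i j) z = _
  have hfun : (fun z' => (pdZM (FLens p q) ρ z') i j)
      = fun z' => (z' / (2 * Real.sqrt (z' ^ 2 + ρ ^ 2)) - 1 / 2) * Gm p q 1 0 i j
          + (z' / (2 * Real.sqrt (z' ^ 2 + ρ ^ 2)) + 1 / 2) * Gm p q 0 1 i j := by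
    funext z'
    rw [pdZ_FLens p q ρ z' (by positivity),
      Gm_entry p q (z' / (2 * Real.sqrt (ρ ^ 2 + z' ^ 2)) - 1 / 2), add_comm (ρ ^ 2) (z' ^ 2)]
  rw [hfun]
  have h' : z ^ 2 + ρ ^ 2 ≠ 0 := by positivity
  have hd := (((hdHalf (ρ ^ 2) z (sq_nonneg ρ) h').sub_const (1/2)).mul_const
      (Gm p q 1 0 i j)).add
    (((hdHalf (ρ ^ 2) z (sq_nonneg ρ) h').add_const (1/2)).mul_const (Gm p q 0 1 i j))
  simp only [Pi.add_def, Pi.sub_def] at hd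
  rw [hd.deriv, Gm_entry p q (ρ ^ 2 / (2 * Real.sqrt (ρ ^ 2 + z ^ 2) ^ 3)), add_comm (ρ ^ 2) (z ^ 2)]


lemma scalarA (ρ z t : ℝ) (hρ : 0 < ρ) (ht : 0 < t) (ht2 : t ^ 2 = ρ ^ 2 + z ^ 2) (hz : z < t) :
    z ^ 2 / (2 * t ^ 3) + 1 / ρ * (ρ / (2 * t)) + ρ ^ 2 / (2 * t ^ 3)
      = ρ / (2 * t) * (ρ / (2 * t)) / ((t - z) / 2)
        + (z / (2 * t) - 1 / 2) * (z / (2 * t) - 1 / 2) / ((t - z) / 2) := by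
  have hρ2 : ρ ^ 2 = t ^ 2 - z ^ 2 := by rw [ht2]; ring
  have htz : t - z ≠ 0 := by linarith
  rw [show 1 / ρ * (ρ / (2 * t)) = 1 / (2 * t) from by field_simp,
    show ρ / (2 * t) * (ρ / (2 * t)) = (t ^ 2 - z ^ 2) / (4 * t ^ 2) from by
      rw [show ρ / (2 * t) * (ρ / (2 * t)) = ρ ^ 2 / (4 * t ^ 2) from by ring, hρ2],
    hρ2]
  field_simp
  ring

lemma scalarB (ρ z t : ℝ) (hρ : 0 < ρ) (ht : 0 < t) (ht2 : t ^ 2 = ρ ^ 2 + z ^ 2) (hz : -t < z) :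
    z ^ 2 / (2 * t ^ 3) + 1 / ρ * (ρ / (2 * t)) + ρ ^ 2 / (2 * t ^ 3)
      = ρ / (2 * t) * (ρ / (2 * t)) / ((t + z) / 2)
        + (z / (2 * t) + 1 / 2) * (z / (2 * t) + 1 / 2) / ((t + z) / 2) := by
  have hρ2 : ρ ^ 2 = t ^ 2 - z ^ 2 := by rw [ht2]; ring
  have htz : t + z ≠ 0 := by linarith
  rw [show 1 / ρ * (ρ / (2 * t)) = 1 / (2 * t) from by field_simp,
    show ρ / (2 * t) * (ρ / (2 * t)) = (t ^ 2 - z ^ 2) / (4 * t ^ 2) from by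
      rw [show ρ / (2 * t) * (ρ / (2 * t)) = ρ ^ 2 / (4 * t ^ 2) from by ring, hρ2],
    hρ2]
  field_simp
  ring

theorem stmt_4 (p q : ℕ) (hp : 0 < p) (hq : 0 < q) (hpq : Nat.Coprime p q) :
    (∀ i j : Fin 2,
      ContDiffOn ℝ (⊤ : ℕ∞) (fun w : ℝ × ℝ => FLens p q w.1 w.2 i j) {w : ℝ × ℝ | 0 < w.1}) ∧
    (∀ ρ z : ℝ, 0 < ρ → IsUnit (FLens p q ρ z)) ∧
    (∀ ρ z : ℝ, 0 < ρ →
      pdRhoM (pdRhoM (FLens p q)) ρ z + (1 / ρ) • pdRhoM (FLens p q) ρ z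
          + pdZM (pdZM (FLens p q)) ρ z =
        pdRhoM (FLens p q) ρ z * (FLens p q ρ z)⁻¹ * pdRhoM (FLens p q) ρ z
          + pdZM (FLens p q) ρ z * (FLens p q ρ z)⁻¹ * pdZM (FLens p q) ρ z) := by
  have hp' : (p : ℝ) ≠ 0 := Nat.cast_ne_zero.mpr hp.ne'
  refine ⟨?_, ?_, ?_⟩
  · intro i j
    have hrepr : (fun w : ℝ × ℝ => FLens p q w.1 w.2 i j)
        = fun w => ((Real.sqrt (w.1 ^ 2 + w.2 ^ 2) - w.2) / 2) * Gm p q 1 0 i j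
            + ((Real.sqrt (w.1 ^ 2 + w.2 ^ 2) + w.2) / 2) * Gm p q 0 1 i j := by
      funext w; rw [FLens_eq, Gm_entry]
    rw [hrepr]
    have hsqrt : ContDiffOn ℝ (⊤ : ℕ∞) (fun w : ℝ × ℝ => Real.sqrt (w.1 ^ 2 + w.2 ^ 2))
        {w : ℝ × ℝ | 0 < w.1} := by
      intro w hw
      have hw1 : (0 : ℝ) < w.1 := hw
      have h0 : w.1 ^ 2 + w.2 ^ 2 ≠ 0 := by positivity
      exact (((contDiff_fst.pow 2).add (contDiff_snd.pow 2)).contDiffAt.sqrt h0).contDiffWithinAt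
    have hsnd : ContDiffOn ℝ (⊤ : ℕ∞) (fun w : ℝ × ℝ => w.2) {w : ℝ × ℝ | 0 < w.1} :=
      contDiff_snd.contDiffOn
    exact (((hsqrt.sub hsnd).div_const 2).mul contDiffOn_const).add
      (((hsqrt.add hsnd).div_const 2).mul contDiffOn_const)
  · intro ρ z hρ
    have h0 : (0:ℝ) < ρ ^ 2 + z ^ 2 := by positivity
    have ht : 0 < Real.sqrt (ρ ^ 2 + z ^ 2) := Real.sqrt_pos.mpr h0
    have habs : |z| < Real.sqrt (ρ ^ 2 + z ^ 2) := by
      rw [← Real.sqrt_sq_eq_abs]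
      exact Real.sqrt_lt_sqrt (sq_nonneg z) (by nlinarith)
    obtain ⟨hz1, hz2⟩ := abs_lt.mp habs
    have ha : 0 < (Real.sqrt (ρ ^ 2 + z ^ 2) - z) / 2 := by linarith
    have hb : 0 < (Real.sqrt (ρ ^ 2 + z ^ 2) + z) / 2 := by linarith
    rw [Matrix.isUnit_iff_isUnit_det, FLens_eq, Gm, Matrix.det_mul, Matrix.det_mul,
      Matrix.det_transpose, Matrix.det_diagonal, Fin.prod_univ_two,
      show (hLens p q).det = 1 / (p : ℝ) from by rw [hLens, Matrix.det_fin_two_of]; ring,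
      isUnit_iff_ne_zero]
    have : (0:ℝ) < 1 / (p : ℝ) := by positivity
    simp only [Matrix.cons_val_zero, Matrix.cons_val_one, Matrix.head_cons]
    positivity
  · intro ρ z hρ
    have h0 : (0:ℝ) < ρ ^ 2 + z ^ 2 := by positivity
    have h0' : ρ ^ 2 + z ^ 2 ≠ 0 := h0.ne'
    have ht : 0 < Real.sqrt (ρ ^ 2 + z ^ 2) := Real.sqrt_pos.mpr h0
    have ht2 : Real.sqrt (ρ ^ 2 + z ^ 2) ^ 2 = ρ ^ 2 + z ^ 2 := Real.sq_sqrt h0.le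
    have habs : |z| < Real.sqrt (ρ ^ 2 + z ^ 2) := by
      rw [← Real.sqrt_sq_eq_abs]
      exact Real.sqrt_lt_sqrt (sq_nonneg z) (by nlinarith)
    obtain ⟨hz1, hz2⟩ := abs_lt.mp habs
    have ha : ((Real.sqrt (ρ ^ 2 + z ^ 2) - z) / 2) ≠ 0 := by
      have : (0:ℝ) < (Real.sqrt (ρ ^ 2 + z ^ 2) - z) / 2 := by linarith
      linarith
    have hb : ((Real.sqrt (ρ ^ 2 + z ^ 2) + z) / 2) ≠ 0 := by
      have : (0:ℝ) < (Real.sqrt (ρ ^ 2 + z ^ 2) + z) / 2 := by linarith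
      linarith
    rw [pdRhoRho_FLens p q ρ z hρ, pdRho_FLens p q ρ z h0', pdZZ_FLens p q ρ z hρ,
      pdZ_FLens p q ρ z h0', FLens_eq, Gm_smul, Gm_add, Gm_add,
      Gm_mul_inv_mul p q hp' _ _ _ _ _ _ ha hb, Gm_mul_inv_mul p q hp' _ _ _ _ _ _ ha hb,
      Gm_add,
      ← scalarA ρ z (Real.sqrt (ρ ^ 2 + z ^ 2)) hρ ht ht2 hz2,
      ← scalarB ρ z (Real.sqrt (ρ ^ 2 + z ^ 2)) hρ ht ht2 hz1]
end

section
/- Fix a > 0 and define on the half-plane {(ρ,z) : ρ > 0} the function u = log(r_a − (z − a)) + log(r_{−a} + (z + a)), where r_{±a} = √(ρ² + (z ∓ a)²). Then the diagonal matrix field F_ring = diag(e^u, 1) satisfies the static harmonic map equation ∂²F/∂ρ² + (1/ρ)∂F/∂ρ + ∂²F/∂z² = (∂F/∂ρ) F⁻¹ (∂F/∂ρ) + (∂F/∂z) F⁻¹ (∂F/∂z) at every point with ρ > 0. -/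
open Matrix

/-- `u(ρ,z) = log(r_a − (z − a)) + log(r_{−a} + (z + a))` with `r_{±a} = √(ρ² + (z ∓ a)²)`. -/
noncomputable def uRing (a ρ z : ℝ) : ℝ :=
  Real.log (Real.sqrt (ρ ^ 2 + (z - a) ^ 2) - (z - a)) +
    Real.log (Real.sqrt (ρ ^ 2 + (z + a) ^ 2) + (z + a))

/-- The static black ring matrix `F_ring = diag(e^u, 1)`. -/
noncomputable def FRing (a ρ z : ℝ) : Matrix (Fin 2) (Fin 2) ℝ :=
  Matrix.diagonal ![Real.exp (uRing a ρ z), 1]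

/-!
Since `F_ring` is diagonal, the harmonic map equation splits into one scalar equation per
diagonal entry. The entry `1` is trivial; for the entry `e^u` the equation reads
`Δ_ax e^u = e^u (u_ρ² + u_z²)`, i.e. `Δ_ax u = 0`. Now `u(ρ, z) = φ(ρ, z - a) + φ(ρ, -a - z)` with
`φ(ρ, w) = log (r - w)`, `r = √(ρ² + w²)`; `Δ_ax` commutes with translations and reflections in `z`,
and `φ` solves `Δ_ax φ = 0` because `∂_ρ φ = 1/ρ + w/(ρ r)` and `∂_w φ = -1/r`.
-/

open Real Filter Topology

section Calculus

variable {f g : ℝ → ℝ} {x : ℝ}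

lemma ContDiffAt.eventually_differentiableAt (hf : ContDiffAt ℝ 2 f x) :
    ∀ᶠ y in 𝓝 x, DifferentiableAt ℝ f y :=
  (hf.eventually (by simp)).mono fun _ hy => hy.differentiableAt (by simp)

lemma ContDiffAt.differentiableAt_deriv (hf : ContDiffAt ℝ 2 f x) :
    DifferentiableAt ℝ (deriv f) x :=
  (hf.derivWithin (m := 1) (by norm_num)).differentiableAt one_ne_zero

lemma deriv_deriv_add (hf : ContDiffAt ℝ 2 f x) (hg : ContDiffAt ℝ 2 g x) :
    deriv (deriv fun y => f y + g y) x = deriv (deriv f) x + deriv (deriv g) x := by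
  have : deriv (fun y => f y + g y) =ᶠ[𝓝 x] fun y => deriv f y + deriv g y := by
    filter_upwards [hf.eventually_differentiableAt, hg.eventually_differentiableAt] with y hfy hgy
    exact deriv_add hfy hgy
  rw [this.deriv_eq]
  exact deriv_add hf.differentiableAt_deriv hg.differentiableAt_deriv

lemma deriv_deriv_exp (hf : ContDiffAt ℝ 2 f x) :
    deriv (deriv fun y => exp (f y)) x = exp (f x) * (deriv f x ^ 2 + deriv (deriv f) x) := by
  have : deriv (fun y => exp (f y)) =ᶠ[𝓝 x] fun y => exp (f y) * deriv f y := by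
    filter_upwards [hf.eventually_differentiableAt] with y hy
    exact hy.hasDerivAt.exp.deriv
  have hd : HasDerivAt (fun y => exp (f y) * deriv f y)
      (exp (f x) * deriv f x * deriv f x + exp (f x) * deriv (deriv f) x) x :=
    (hf.differentiableAt two_ne_zero).hasDerivAt.exp.mul hf.differentiableAt_deriv.hasDerivAt
  rw [this.deriv_eq, hd.deriv]
  ring

end Calculus

noncomputable def axLaplacian (u : ℝ → ℝ → ℝ) (ρ z : ℝ) : ℝ :=
  deriv (deriv fun ρ' => u ρ' z) ρ + 1 / ρ * deriv (fun ρ' => u ρ' z) ρ + deriv (deriv (u ρ)) z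

section AxLaplacian

variable {u v : ℝ → ℝ → ℝ} {ρ z : ℝ}

lemma axLaplacian_add (huρ : ContDiffAt ℝ 2 (fun ρ' => u ρ' z) ρ) (huz : ContDiffAt ℝ 2 (u ρ) z)
    (hvρ : ContDiffAt ℝ 2 (fun ρ' => v ρ' z) ρ) (hvz : ContDiffAt ℝ 2 (v ρ) z) :
    axLaplacian (fun ρ z => u ρ z + v ρ z) ρ z = axLaplacian u ρ z + axLaplacian v ρ z := by
  simp only [axLaplacian]
  rw [deriv_deriv_add huρ hvρ, deriv_deriv_add huz hvz,
    deriv_fun_add (huρ.differentiableAt two_ne_zero) (hvρ.differentiableAt two_ne_zero)]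
  ring

lemma axLaplacian_exp (hρ : ContDiffAt ℝ 2 (fun ρ' => u ρ' z) ρ) (hz : ContDiffAt ℝ 2 (u ρ) z) :
    axLaplacian (fun ρ z => exp (u ρ z)) ρ z =
      exp (u ρ z) * (axLaplacian u ρ z + deriv (fun ρ' => u ρ' z) ρ ^ 2 + deriv (u ρ) z ^ 2) := by
  simp only [axLaplacian]
  rw [deriv_deriv_exp hρ, deriv_deriv_exp hz,
    (hρ.differentiableAt two_ne_zero).hasDerivAt.exp.deriv]
  ring

lemma axLaplacian_comp_sub_const (c : ℝ) :
    axLaplacian (fun ρ z => u ρ (z - c)) ρ z = axLaplacian u ρ (z - c) := by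
  have : deriv (fun z' => u ρ (z' - c)) = fun z' => deriv (u ρ) (z' - c) :=
    funext fun _ => deriv_comp_sub_const ..
  simp only [axLaplacian, this, deriv_comp_sub_const]

lemma axLaplacian_comp_const_sub (c : ℝ) :
    axLaplacian (fun ρ z => u ρ (c - z)) ρ z = axLaplacian u ρ (c - z) := by
  have : deriv (fun z' => u ρ (c - z')) = fun z' => -deriv (u ρ) (c - z') :=
    funext fun _ => deriv_comp_const_sub ..
  simp only [axLaplacian, this, deriv.fun_neg, deriv_comp_const_sub, neg_neg]

end AxLaplacian

-- The potential of the semi-infinite rod `{ρ = 0, w ≥ 0}` on the axis.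
noncomputable def rodPotential (ρ w : ℝ) : ℝ :=
  log (√(ρ ^ 2 + w ^ 2) - w)

section RodPotential

variable {ρ : ℝ}

lemma sqrt_sq_add_sq_sub_pos (hρ : ρ ≠ 0) (w : ℝ) : 0 < √(ρ ^ 2 + w ^ 2) - w := by
  have hρ2 : 0 < ρ ^ 2 := by positivity
  have : |w| < √(ρ ^ 2 + w ^ 2) := Real.lt_sqrt_of_sq_lt (by rw [sq_abs]; linarith)
  linarith [le_abs_self w]

-- The derivative `ρ / (r (r - w))` is rewritten using `(r - w) (r + w) = ρ²`.
lemma hasDerivAt_rodPotential_left (hρ : ρ ≠ 0) (w : ℝ) :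
    HasDerivAt (fun ρ' => rodPotential ρ' w) (1 / ρ + w / (ρ * √(ρ ^ 2 + w ^ 2))) ρ := by
  have hpos : 0 < ρ ^ 2 + w ^ 2 := by positivity
  have hR2 : √(ρ ^ 2 + w ^ 2) ^ 2 = ρ ^ 2 + w ^ 2 := Real.sq_sqrt hpos.le
  refine ((((hasDerivAt_pow 2 ρ).add_const (w ^ 2)).sqrt hpos.ne').sub_const w).log
    (sqrt_sq_add_sq_sub_pos hρ w).ne' |>.congr_deriv ?_
  have := (sqrt_sq_add_sq_sub_pos hρ w).ne'
  have := (Real.sqrt_pos.2 hpos).ne'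
  norm_num
  field_simp
  linear_combination -hR2

lemma hasDerivAt_rodPotential_right (hρ : ρ ≠ 0) (w : ℝ) :
    HasDerivAt (rodPotential ρ) (-1 / √(ρ ^ 2 + w ^ 2)) w := by
  have hpos : 0 < ρ ^ 2 + w ^ 2 := by positivity
  refine ((((hasDerivAt_pow 2 w).const_add (ρ ^ 2)).sqrt hpos.ne').sub (hasDerivAt_id' w)).log
    (sqrt_sq_add_sq_sub_pos hρ w).ne' |>.congr_deriv ?_
  have := (sqrt_sq_add_sq_sub_pos hρ w).ne'
  have := (Real.sqrt_pos.2 hpos).ne'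
  norm_num
  field_simp
  ring

lemma contDiffAt_rodPotential_left (hρ : ρ ≠ 0) (w : ℝ) :
    ContDiffAt ℝ 2 (fun ρ' => rodPotential ρ' w) ρ :=
  (((contDiffAt_id.pow 2).add contDiffAt_const).sqrt
    (by positivity : 0 < ρ ^ 2 + w ^ 2).ne').sub contDiffAt_const |>.log
    (sqrt_sq_add_sq_sub_pos hρ w).ne'

lemma contDiff_rodPotential_right (hρ : ρ ≠ 0) : ContDiff ℝ 2 (rodPotential ρ) :=
  ((contDiff_const.add (contDiff_id.pow 2)).sqrt fun w =>
    (by positivity : 0 < ρ ^ 2 + w ^ 2).ne').sub contDiff_id |>.log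
    fun w => (sqrt_sq_add_sq_sub_pos hρ w).ne'

lemma axLaplacian_rodPotential (hρ : ρ ≠ 0) (w : ℝ) : axLaplacian rodPotential ρ w = 0 := by
  have hpos : 0 < ρ ^ 2 + w ^ 2 := by positivity
  have hR := (Real.sqrt_pos.2 hpos).ne'
  have hR2 : √(ρ ^ 2 + w ^ 2) ^ 2 = ρ ^ 2 + w ^ 2 := Real.sq_sqrt hpos.le
  have hsqrt_left : HasDerivAt (fun ρ' => √(ρ' ^ 2 + w ^ 2)) (ρ / √(ρ ^ 2 + w ^ 2)) ρ := by
    refine ((hasDerivAt_pow 2 ρ).add_const (w ^ 2)).sqrt hpos.ne' |>.congr_deriv ?_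
    field_simp
    norm_num
  have hsqrt_right : HasDerivAt (fun w' => √(ρ ^ 2 + w' ^ 2)) (w / √(ρ ^ 2 + w ^ 2)) w := by
    refine ((hasDerivAt_pow 2 w).const_add (ρ ^ 2)).sqrt hpos.ne' |>.congr_deriv ?_
    field_simp
    norm_num
  have hleft_left : HasDerivAt (fun ρ' => 1 / ρ' + w / (ρ' * √(ρ' ^ 2 + w ^ 2)))
      (-1 / ρ ^ 2 - w * (2 * ρ ^ 2 + w ^ 2) / (ρ ^ 2 * √(ρ ^ 2 + w ^ 2) ^ 3)) ρ := by
    refine ((hasDerivAt_const ρ 1).div (hasDerivAt_id' ρ) hρ).add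
      ((hasDerivAt_const ρ w).div ((hasDerivAt_id' ρ).mul hsqrt_left) (mul_ne_zero hρ hR))
      |>.congr_deriv ?_
    simp only [Pi.mul_apply]
    field_simp
    linear_combination (-w) * hR2
  have hright_right : HasDerivAt (fun w' => -1 / √(ρ ^ 2 + w' ^ 2))
      (w / √(ρ ^ 2 + w ^ 2) ^ 3) w := by
    refine (hsqrt_right.inv hR).const_mul (-1) |>.congr_deriv ?_
    field_simp
  have hderiv_left : deriv (fun ρ' => rodPotential ρ' w) =ᶠ[𝓝 ρ]
      fun ρ' => 1 / ρ' + w / (ρ' * √(ρ' ^ 2 + w ^ 2)) := by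
    filter_upwards [eventually_ne_nhds hρ] with ρ' hρ'
    exact (hasDerivAt_rodPotential_left hρ' w).deriv
  have hderiv_right : deriv (rodPotential ρ) = fun w' => -1 / √(ρ ^ 2 + w' ^ 2) :=
    funext fun w' => (hasDerivAt_rodPotential_right hρ w').deriv
  rw [axLaplacian, hderiv_left.deriv_eq, (hasDerivAt_rodPotential_left hρ w).deriv, hderiv_right,
    hleft_left.deriv, hright_right.deriv]
  field_simp
  linear_combination w * hR2

end RodPotential

section

variable {a ρ z : ℝ}

lemma uRing_eq_rodPotential (a : ℝ) :
    uRing a = fun ρ z => rodPotential ρ (z - a) + rodPotential ρ (-a - z) := by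
  funext ρ z
  simp only [uRing, rodPotential]
  ring_nf

lemma contDiffAt_uRing_left (hρ : ρ ≠ 0) : ContDiffAt ℝ 2 (fun ρ' => uRing a ρ' z) ρ := by
  rw [uRing_eq_rodPotential]
  exact (contDiffAt_rodPotential_left hρ _).add (contDiffAt_rodPotential_left hρ _)

lemma contDiffAt_uRing_right (hρ : ρ ≠ 0) : ContDiffAt ℝ 2 (uRing a ρ) z := by
  rw [uRing_eq_rodPotential]
  exact (((contDiff_rodPotential_right hρ).comp (contDiff_id.sub contDiff_const)).add
    ((contDiff_rodPotential_right hρ).comp (contDiff_const.sub contDiff_id))).contDiffAt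

lemma axLaplacian_uRing (hρ : ρ ≠ 0) : axLaplacian (uRing a) ρ z = 0 := by
  have hR := contDiff_rodPotential_right hρ
  have h₁ : ContDiffAt ℝ 2 (fun z' => rodPotential ρ (z' - a)) z :=
    (hR.comp (contDiff_id.sub contDiff_const)).contDiffAt
  have h₂ : ContDiffAt ℝ 2 (fun z' => rodPotential ρ (-a - z')) z :=
    (hR.comp (contDiff_const.sub contDiff_id)).contDiffAt
  rw [uRing_eq_rodPotential, axLaplacian_add (u := fun ρ z => rodPotential ρ (z - a))
    (v := fun ρ z => rodPotential ρ (-a - z)) (contDiffAt_rodPotential_left hρ _) h₁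
    (contDiffAt_rodPotential_left hρ _) h₂, axLaplacian_comp_sub_const,
    axLaplacian_comp_const_sub, axLaplacian_rodPotential hρ, axLaplacian_rodPotential hρ, add_zero]

end

def ScalarHarmonicMapEq (f : ℝ → ℝ → ℝ) (ρ z : ℝ) : Prop :=
  axLaplacian f ρ z =
    deriv (fun ρ' => f ρ' z) ρ * (f ρ z)⁻¹ * deriv (fun ρ' => f ρ' z) ρ +
      deriv (f ρ) z * (f ρ z)⁻¹ * deriv (f ρ) z

section

variable {u : ℝ → ℝ → ℝ} {ρ z : ℝ}

lemma scalarHarmonicMapEq_const (c : ℝ) : ScalarHarmonicMapEq (fun _ _ => c) ρ z := by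
  simp [ScalarHarmonicMapEq, axLaplacian]

lemma scalarHarmonicMapEq_exp (hρ : ContDiffAt ℝ 2 (fun ρ' => u ρ' z) ρ)
    (hz : ContDiffAt ℝ 2 (u ρ) z) (hu : axLaplacian u ρ z = 0) :
    ScalarHarmonicMapEq (fun ρ z => exp (u ρ z)) ρ z := by
  rw [ScalarHarmonicMapEq, axLaplacian_exp hρ hz, hu,
    (hρ.differentiableAt two_ne_zero).hasDerivAt.exp.deriv,
    (hz.differentiableAt two_ne_zero).hasDerivAt.exp.deriv]
  field_simp
  ring

end

lemma Matrix.inv_diagonal_of_ne_zero {n K : Type*} [Fintype n] [DecidableEq n] [Field K]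
    {v : n → K} (hv : ∀ i, v i ≠ 0) : (diagonal v)⁻¹ = diagonal v⁻¹ := by
  refine inv_eq_left_inv ?_
  rw [diagonal_mul_diagonal, ← diagonal_one]
  exact congrArg diagonal (funext fun i => inv_mul_cancel₀ (hv i))

section

variable (d : ℝ → ℝ → Fin 2 → ℝ) (ρ z : ℝ)

lemma pdRhoM_diagonal :
    pdRhoM (fun ρ z => diagonal (d ρ z)) ρ z = diagonal fun i => deriv (fun ρ' => d ρ' z i) ρ := by
  ext i j
  rcases eq_or_ne i j with rfl | hij
  · simp [pdRhoM]
  · simp [pdRhoM, hij]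

lemma pdZM_diagonal :
    pdZM (fun ρ z => diagonal (d ρ z)) ρ z = diagonal fun i => deriv (fun z' => d ρ z' i) z := by
  ext i j
  rcases eq_or_ne i j with rfl | hij
  · simp [pdZM]
  · simp [pdZM, hij]

end

lemma harmonicMapEq_diagonal {F : ℝ → ℝ → Matrix (Fin 2) (Fin 2) ℝ} {d : ℝ → ℝ → Fin 2 → ℝ}
    {ρ z : ℝ} (hF : F = fun ρ z => diagonal (d ρ z)) (hd : ∀ i, d ρ z i ≠ 0)
    (h : ∀ i, ScalarHarmonicMapEq (fun ρ z => d ρ z i) ρ z) :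
    pdRhoM (pdRhoM F) ρ z + (1 / ρ) • pdRhoM F ρ z + pdZM (pdZM F) ρ z =
      pdRhoM F ρ z * (F ρ z)⁻¹ * pdRhoM F ρ z + pdZM F ρ z * (F ρ z)⁻¹ * pdZM F ρ z := by
  subst hF
  rw [funext₂ (pdRhoM_diagonal d), funext₂ (pdZM_diagonal d), pdRhoM_diagonal, pdZM_diagonal,
    inv_diagonal_of_ne_zero hd]
  simp only [← diagonal_smul, diagonal_mul_diagonal, diagonal_add]
  exact congrArg diagonal (funext h)

theorem stmt_7_general (a : ℝ) (ρ z : ℝ) (hρ : 0 < ρ) :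
    pdRhoM (pdRhoM (FRing a)) ρ z + (1 / ρ) • pdRhoM (FRing a) ρ z
        + pdZM (pdZM (FRing a)) ρ z =
      pdRhoM (FRing a) ρ z * (FRing a ρ z)⁻¹ * pdRhoM (FRing a) ρ z
        + pdZM (FRing a) ρ z * (FRing a ρ z)⁻¹ * pdZM (FRing a) ρ z := by
  refine harmonicMapEq_diagonal (d := fun ρ z => ![exp (uRing a ρ z), 1]) rfl
    (fun i => by fin_cases i <;> simp [exp_ne_zero]) fun i => ?_
  fin_cases i
  · exact scalarHarmonicMapEq_exp (contDiffAt_uRing_left hρ.ne') (contDiffAt_uRing_right hρ.ne')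
      (axLaplacian_uRing hρ.ne')
  · exact scalarHarmonicMapEq_const 1

theorem stmt_7 (a : ℝ) (ha : 0 < a) (ρ z : ℝ) (hρ : 0 < ρ) :
    pdRhoM (pdRhoM (FRing a)) ρ z + (1 / ρ) • pdRhoM (FRing a) ρ z
        + pdZM (pdZM (FRing a)) ρ z =
      pdRhoM (FRing a) ρ z * (FRing a ρ z)⁻¹ * pdRhoM (FRing a) ρ z
        + pdZM (FRing a) ρ z * (FRing a ρ z)⁻¹ * pdZM (FRing a) ρ z :=
  stmt_7_general a ρ z hρ
end

section
/- Let Γ be a closed subset of the z-axis {x₁ = x₂ = 0} in ℝ³, and let φ : ℝ³ \ Γ → ℝ be a C² function satisfying Δφ ≥ 0 on ℝ³ \ Γ (where Δ is the Euclidean Laplacian). Assume φ is bounded above and that limsup_{|x|→∞} φ(x) ≤ 0. Then φ ≤ 0 everywhere on ℝ³ \ Γ. -/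
open Function Real Set Filter Topology

/-- The pure second partial derivative `∂²f/∂xᵢ²` of `f : ℝ³ → ℝ` at `x`. -/
noncomputable def secondPartial (f : (Fin 3 → ℝ) → ℝ) (i : Fin 3) (x : Fin 3 → ℝ) : ℝ :=
  deriv (deriv (fun t : ℝ => f (Function.update x i t))) (x i)

/-- The Euclidean Laplacian of `f : ℝ³ → ℝ` at `x`. -/
noncomputable def laplacian3 (f : (Fin 3 → ℝ) → ℝ) (x : Fin 3 → ℝ) : ℝ :=
  ∑ i : Fin 3, secondPartial f i x

/-- One-variable second-derivative test: at an interior local maximum of a C² function,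
the second derivative is nonpositive. -/
lemma second_deriv_nonpos_of_isLocalMax' {f : ℝ → ℝ} {s : Set ℝ} (hs : IsOpen s)
    {a : ℝ} (ha : a ∈ s) (hf : ContDiffOn ℝ 2 f s) (hmax : IsLocalMax f a) :
    deriv (deriv f) a ≤ 0 := by
  by_contra hpos
  push_neg at hpos
  set c := deriv (deriv f) a with hc
  have hfd : DifferentiableOn ℝ f s := hf.differentiableOn two_ne_zero
  have hf1 : ContDiffOn ℝ 1 (deriv f) s := hf.deriv_of_isOpen hs le_rfl
  have hf1d : DifferentiableAt ℝ (deriv f) a :=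
    ((hf1.differentiableOn one_ne_zero).differentiableAt (hs.mem_nhds ha))
  have hder : HasDerivAt (deriv f) c a := hf1d.hasDerivAt
  have h0 : deriv f a = 0 := hmax.deriv_eq_zero
  have hslope : Tendsto (slope (deriv f) a) (𝓝[≠] a) (𝓝 c) :=
    hasDerivAt_iff_tendsto_slope.mp hder
  have hmono : 𝓝[>] a ≤ 𝓝[≠] a :=
    nhdsWithin_mono _ (fun t ht => ne_of_gt ht)
  have hev : ∀ᶠ t in 𝓝[>] a, 0 < slope (deriv f) a t :=
    (hslope.mono_left hmono).eventually (eventually_gt_nhds hpos)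
  rcases (nhdsGT_basis a).eventually_iff.mp hev with ⟨b₁, hb₁, hslopepos⟩
  rcases Metric.mem_nhds_iff.mp (hs.mem_nhds ha) with ⟨δs, hδs, hball⟩
  rcases Metric.eventually_nhds_iff.mp hmax with ⟨δm, hδm, hmaxball⟩
  obtain ⟨m, hm0, hm1, hm2, hm3⟩ : ∃ m : ℝ, 0 < m ∧ m ≤ b₁ - a ∧ m ≤ δs ∧ m ≤ δm :=
    ⟨min (min (b₁ - a) δs) δm,
      lt_min (lt_min (sub_pos.mpr hb₁) hδs) hδm,
      le_trans (min_le_left _ _) (min_le_left _ _),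
      le_trans (min_le_left _ _) (min_le_right _ _), min_le_right _ _⟩
  have hat : a < a + m / 2 := by linarith
  have hIcc : Icc a (a + m / 2) ⊆ s := by
    intro y hy
    apply hball
    simp only [Metric.mem_ball, Real.dist_eq, abs_lt]
    constructor <;> [nlinarith [hy.1]; nlinarith [hy.2]]
  have hderivpos : ∀ y ∈ Ioo a (a + m / 2), 0 < deriv f y := by
    intro y hy
    have hy1 : y ∈ Ioo a b₁ := ⟨hy.1, by linarith [hy.2]⟩
    have hsl := hslopepos hy1
    rw [slope_def_field, h0, sub_zero] at hsl
    have hya : 0 < y - a := sub_pos.mpr hy.1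
    have := mul_pos hsl hya
    rwa [div_mul_cancel₀ _ (ne_of_gt hya)] at this
  have hmonoF : StrictMonoOn f (Icc a (a + m / 2)) := by
    apply strictMonoOn_of_deriv_pos (convex_Icc _ _)
    · exact (hf.continuousOn).mono hIcc
    · intro y hy
      rw [interior_Icc] at hy
      exact hderivpos y hy
  have hlt : f a < f (a + m / 2) :=
    hmonoF (left_mem_Icc.mpr (le_of_lt hat)) (right_mem_Icc.mpr (le_of_lt hat)) hat
  have hle : f (a + m / 2) ≤ f a := by
    apply hmaxball
    rw [Real.dist_eq, add_sub_cancel_left, abs_of_pos (by linarith)]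
    linarith
  linarith

lemma contDiff_update3 (x : Fin 3 → ℝ) (i : Fin 3) :
    ContDiff ℝ (⊤ : ℕ∞) (fun t : ℝ => Function.update x i t) := by
  have h : (fun t : ℝ => Function.update x i t)
      = fun t => Function.update x i 0 + t • Pi.single i 1 := by
    funext t j
    by_cases hji : j = i
    · subst hji; simp
    · simp [Function.update_of_ne hji, Pi.single_eq_of_ne hji]
  rw [h]
  exact contDiff_const.add (contDiff_id.smul contDiff_const)

lemma slice_contDiffOn {f : (Fin 3 → ℝ) → ℝ} {V : Set (Fin 3 → ℝ)}
    (hf : ContDiffOn ℝ 2 f V) (x : Fin 3 → ℝ) (i : Fin 3) :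
    ContDiffOn ℝ 2 (fun t : ℝ => f (Function.update x i t))
      ((fun t : ℝ => Function.update x i t) ⁻¹' V) :=
  hf.comp ((contDiff_update3 x i).of_le (WithTop.coe_le_coe.mpr (le_top : (2 : ℕ∞) ≤ ⊤))).contDiffOn (fun _ ht => ht)

lemma laplacian3_nonpos_of_isLocalMax {f : (Fin 3 → ℝ) → ℝ} {V : Set (Fin 3 → ℝ)}
    (hV : IsOpen V) {x : Fin 3 → ℝ} (hx : x ∈ V) (hf : ContDiffOn ℝ 2 f V)
    (hmax : IsLocalMax f x) : laplacian3 f x ≤ 0 := by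
  unfold laplacian3
  apply Finset.sum_nonpos
  intro i _
  have hL : Continuous (fun t : ℝ => Function.update x i t) := (contDiff_update3 x i).continuous
  have hLx : Function.update x i (x i) = x := Function.update_eq_self i x
  have hopen : IsOpen ((fun t : ℝ => Function.update x i t) ⁻¹' V) := hV.preimage hL
  have hmem : x i ∈ (fun t : ℝ => Function.update x i t) ⁻¹' V := by
    simp only [Set.mem_preimage, hLx]; exact hx
  have hcont : ContinuousAt (fun t : ℝ => Function.update x i t) (x i) := hL.continuousAt
  have hlm : IsLocalMax (fun t : ℝ => f (Function.update x i t)) (x i) := by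
    have := hcont.tendsto
    rw [hLx] at this
    have hev := this.eventually hmax
    simpa [IsLocalMax, IsMaxFilter, hLx] using hev
  exact second_deriv_nonpos_of_isLocalMax' hopen hmem (slice_contDiffOn hf x i) hlm

lemma deriv2_add_smul {F G : ℝ → ℝ} {s : Set ℝ} (hs : IsOpen s) {a : ℝ} (ha : a ∈ s)
    (hF : ContDiffOn ℝ 2 F s) (hG : ContDiffOn ℝ 2 G s) (c : ℝ) :
    deriv (deriv (fun t => F t + c * G t)) a
      = deriv (deriv F) a + c * deriv (deriv G) a := by
  have hFd : DifferentiableOn ℝ F s := hF.differentiableOn two_ne_zero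
  have hGd : DifferentiableOn ℝ G s := hG.differentiableOn two_ne_zero
  have hev : (deriv fun t => F t + c * G t) =ᶠ[𝓝 a] fun t => deriv F t + c * deriv G t := by
    filter_upwards [hs.mem_nhds ha] with t ht
    have h1 : DifferentiableAt ℝ F t := hFd.differentiableAt (hs.mem_nhds ht)
    have h2 : DifferentiableAt ℝ G t := hGd.differentiableAt (hs.mem_nhds ht)
    exact (h1.hasDerivAt.add (h2.hasDerivAt.const_mul c)).deriv
  rw [hev.deriv_eq]
  have hF1 : DifferentiableAt ℝ (deriv F) a :=
    ((hF.deriv_of_isOpen hs (m := 1) le_rfl).differentiableOn one_ne_zero).differentiableAt (hs.mem_nhds ha)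
  have hG1 : DifferentiableAt ℝ (deriv G) a :=
    ((hG.deriv_of_isOpen hs (m := 1) le_rfl).differentiableOn one_ne_zero).differentiableAt (hs.mem_nhds ha)
  exact (hF1.hasDerivAt.add (hG1.hasDerivAt.const_mul c)).deriv

lemma laplacian3_add_smul {f g : (Fin 3 → ℝ) → ℝ} {V : Set (Fin 3 → ℝ)}
    (hV : IsOpen V) {x : Fin 3 → ℝ} (hx : x ∈ V)
    (hf : ContDiffOn ℝ 2 f V) (hg : ContDiffOn ℝ 2 g V) (c : ℝ) :
    laplacian3 (fun y => f y + c * g y) x = laplacian3 f x + c * laplacian3 g x := by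
  unfold laplacian3
  rw [Finset.mul_sum, ← Finset.sum_add_distrib]
  apply Finset.sum_congr rfl
  intro i _
  have hL : Continuous (fun t : ℝ => Function.update x i t) := (contDiff_update3 x i).continuous
  have hopen : IsOpen ((fun t : ℝ => Function.update x i t) ⁻¹' V) := hV.preimage hL
  have hmem : x i ∈ (fun t : ℝ => Function.update x i t) ⁻¹' V := by
    simp only [Set.mem_preimage, Function.update_eq_self]; exact hx
  exact deriv2_add_smul hopen hmem (slice_contDiffOn hf x i) (slice_contDiffOn hg x i) c

lemma deriv2_sq_add_const (C : ℝ) (a : ℝ) :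
    deriv (deriv (fun t : ℝ => t ^ 2 + C)) a = 2 := by
  have h1 : (deriv fun t : ℝ => t ^ 2 + C) = fun t => 2 * t := by
    funext t
    simpa using ((hasDerivAt_pow 2 t).add_const C).deriv
  rw [h1]
  have h2 : HasDerivAt (fun t : ℝ => 2 * t) (2 * 1) a := (hasDerivAt_id a).const_mul 2
  simpa using h2.deriv

lemma deriv2_logpart (C A : ℝ) (a : ℝ) (h : 0 < a ^ 2 + A) :
    deriv (deriv (fun t : ℝ => C - Real.log (t ^ 2 + A) / 2)) a
      = (a ^ 2 - A) / (a ^ 2 + A) ^ 2 := by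
  have hS : IsOpen {t : ℝ | 0 < t ^ 2 + A} :=
    isOpen_lt continuous_const (by continuity)
  have hevd : (deriv fun t : ℝ => C - Real.log (t ^ 2 + A) / 2)
      =ᶠ[𝓝 a] fun t => -(t / (t ^ 2 + A)) := by
    filter_upwards [hS.mem_nhds h] with t ht
    have h1 : HasDerivAt (fun t : ℝ => t ^ 2 + A) (2 * t) t := by
      simpa using (hasDerivAt_pow 2 t).add_const A
    have h2 : HasDerivAt (fun t : ℝ => Real.log (t ^ 2 + A)) (2 * t / (t ^ 2 + A)) t :=
      h1.log (ne_of_gt ht)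
    have h3 : HasDerivAt (fun t : ℝ => C - Real.log (t ^ 2 + A) / 2)
        (0 - 2 * t / (t ^ 2 + A) / 2) t := (hasDerivAt_const t C).sub (h2.div_const 2)
    rw [h3.deriv]
    ring
  rw [hevd.deriv_eq]
  have h1 : HasDerivAt (fun t : ℝ => t ^ 2 + A) (2 * a) a := by
    simpa using (hasDerivAt_pow 2 a).add_const A
  have hga : HasDerivAt (fun t : ℝ => t / (t ^ 2 + A))
      ((1 * (a ^ 2 + A) - a * (2 * a)) / (a ^ 2 + A) ^ 2) a :=
    (hasDerivAt_id a).div h1 (ne_of_gt h)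
  rw [HasDerivAt.deriv (f := fun t => -(t / (t ^ 2 + A))) hga.neg]
  field_simp
  ring

lemma laplacian3_q (x : Fin 3 → ℝ) :
    laplacian3 (fun y => (y 0) ^ 2 + (y 1) ^ 2 + (y 2) ^ 2) x = 6 := by
  have h01 : (1 : Fin 3) ≠ 0 := by decide
  have h02 : (2 : Fin 3) ≠ 0 := by decide
  have h10 : (0 : Fin 3) ≠ 1 := by decide
  have h12 : (2 : Fin 3) ≠ 1 := by decide
  have h20 : (0 : Fin 3) ≠ 2 := by decide
  have h21 : (1 : Fin 3) ≠ 2 := by decide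
  rw [laplacian3, Fin.sum_univ_three]
  have e0 : (fun t : ℝ => (Function.update x 0 t 0) ^ 2 + (Function.update x 0 t 1) ^ 2
      + (Function.update x 0 t 2) ^ 2) = fun t => t ^ 2 + ((x 1) ^ 2 + (x 2) ^ 2) := by
    funext t
    simp [Function.update_apply, h01, h02]
    ring
  have e1 : (fun t : ℝ => (Function.update x 1 t 0) ^ 2 + (Function.update x 1 t 1) ^ 2
      + (Function.update x 1 t 2) ^ 2) = fun t => t ^ 2 + ((x 0) ^ 2 + (x 2) ^ 2) := by
    funext t
    simp [Function.update_apply, h10, h12]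
    ring
  have e2 : (fun t : ℝ => (Function.update x 2 t 0) ^ 2 + (Function.update x 2 t 1) ^ 2
      + (Function.update x 2 t 2) ^ 2) = fun t => t ^ 2 + ((x 0) ^ 2 + (x 1) ^ 2) := by
    funext t
    simp [Function.update_apply, h20, h21]
    ring
  rw [secondPartial, secondPartial, secondPartial, e0, e1, e2,
    deriv2_sq_add_const, deriv2_sq_add_const, deriv2_sq_add_const]
  norm_num

lemma laplacian3_logbarrier (C : ℝ) (x : Fin 3 → ℝ) (h : 0 < (x 0) ^ 2 + (x 1) ^ 2) :
    laplacian3 (fun y => C - Real.log ((y 0) ^ 2 + (y 1) ^ 2) / 2) x = 0 := by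
  have h01 : (1 : Fin 3) ≠ 0 := by decide
  have h10 : (0 : Fin 3) ≠ 1 := by decide
  have h20 : (0 : Fin 3) ≠ 2 := by decide
  have h21 : (1 : Fin 3) ≠ 2 := by decide
  rw [laplacian3, Fin.sum_univ_three]
  have e0 : (fun t : ℝ => C - Real.log ((Function.update x 0 t 0) ^ 2
      + (Function.update x 0 t 1) ^ 2) / 2)
      = fun t => C - Real.log (t ^ 2 + (x 1) ^ 2) / 2 := by
    funext t
    simp [Function.update_apply, h01]
  have e1 : (fun t : ℝ => C - Real.log ((Function.update x 1 t 0) ^ 2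
      + (Function.update x 1 t 1) ^ 2) / 2)
      = fun t => C - Real.log (t ^ 2 + (x 0) ^ 2) / 2 := by
    funext t
    simp [Function.update_apply, h10]
    rw [add_comm]
  have e2 : (fun t : ℝ => C - Real.log ((Function.update x 2 t 0) ^ 2
      + (Function.update x 2 t 1) ^ 2) / 2)
      = fun _ => C - Real.log ((x 0) ^ 2 + (x 1) ^ 2) / 2 := by
    funext t
    simp [Function.update_apply, h20, h21]
  have h' : 0 < (x 1) ^ 2 + (x 0) ^ 2 := by linarith
  rw [secondPartial, secondPartial, secondPartial, e0, e1, e2,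
    deriv2_logpart _ _ _ h, deriv2_logpart _ _ _ h']
  have hd : deriv (deriv (fun _ : ℝ => C - Real.log ((x 0) ^ 2 + (x 1) ^ 2) / 2)) (x 2) = 0 := by
    simp
  rw [hd]
  have hne : (x 0) ^ 2 + (x 1) ^ 2 ≠ 0 := ne_of_gt h
  field_simp
  ring

theorem stmt_12 (Γ : Set (Fin 3 → ℝ)) (hΓclosed : IsClosed Γ)
    (hΓaxis : Γ ⊆ {x : Fin 3 → ℝ | x 0 = 0 ∧ x 1 = 0})
    (φ : (Fin 3 → ℝ) → ℝ) (hφ : ContDiffOn ℝ 2 φ Γᶜ)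
    (hsub : ∀ x ∉ Γ, 0 ≤ laplacian3 φ x)
    (hbd : ∃ B : ℝ, ∀ x ∉ Γ, φ x ≤ B)
    (hlim : ∀ ε : ℝ, 0 < ε → ∃ R : ℝ, ∀ x ∉ Γ, R < ‖x‖ → φ x ≤ ε) :
    ∀ x ∉ Γ, φ x ≤ 0 := by
  obtain ⟨B, hB⟩ := hbd
  have main : ∀ x₀, x₀ ∉ Γ → 0 < (x₀ 0) ^ 2 + (x₀ 1) ^ 2 → φ x₀ ≤ 0 := by
    intro x₀ hx₀Γ hrsq₀
    have key : ∀ ε : ℝ, 0 < ε → φ x₀ ≤ 3 * ε := by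
      intro ε hε
      obtain ⟨R, hR⟩ := hlim ε hε
      obtain ⟨R', hR'def⟩ : ∃ r : ℝ, r = max (R + 1) (‖x₀‖ + 1) := ⟨_, rfl⟩
      have hR'pos : 0 < R' := by rw [hR'def]; exact lt_of_lt_of_le (by positivity) (le_max_right _ _)
      have hRR' : R < R' := by rw [hR'def]; exact lt_of_lt_of_le (by linarith) (le_max_left _ _)
      have hx₀R' : ‖x₀‖ < R' := by
        rw [hR'def]; exact lt_of_lt_of_le (by linarith) (le_max_right _ _)
      have hR'sq : 0 < 4 * R' ^ 2 := by nlinarith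
      obtain ⟨L₀, hL₀⟩ : ∃ l : ℝ, l = Real.log (4 * R' ^ 2) / 2
        - Real.log ((x₀ 0) ^ 2 + (x₀ 1) ^ 2) / 2 := ⟨_, rfl⟩
      obtain ⟨δ, hδdef⟩ : ∃ d : ℝ, d = ε / (|L₀| + 1) := ⟨_, rfl⟩
      have hδpos : 0 < δ := by rw [hδdef]; exact div_pos hε (by positivity)
      obtain ⟨X, hXdef⟩ : ∃ x : ℝ, x = (|B| + 1) / δ := ⟨_, rfl⟩
      have hXpos : 0 < X := by rw [hXdef]; exact div_pos (by positivity) hδpos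
      obtain ⟨η, hηdef⟩ : ∃ e : ℝ, e = ε / (3 * R' ^ 2 + 1) := ⟨_, rfl⟩
      have hηpos : 0 < η := by rw [hηdef]; exact div_pos hε (by positivity)
      obtain ⟨ρ, hρdef⟩ : ∃ r : ℝ, r = min (((x₀ 0) ^ 2 + (x₀ 1) ^ 2) / 2)
        (4 * R' ^ 2 * Real.exp (-(2 * X))) := ⟨_, rfl⟩
      have hρpos : 0 < ρ := by
        rw [hρdef]; exact lt_min (by positivity) (mul_pos hR'sq (Real.exp_pos _))
      have hρx₀ : ρ < (x₀ 0) ^ 2 + (x₀ 1) ^ 2 := by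
        rw [hρdef]; exact lt_of_le_of_lt (min_le_left _ _) (by linarith)
      have hrsqcont : Continuous (fun y : Fin 3 → ℝ => (y 0) ^ 2 + (y 1) ^ 2) :=
        ((continuous_apply (0 : Fin 3)).pow 2).add ((continuous_apply (1 : Fin 3)).pow 2)
      obtain ⟨V, hVdef⟩ : ∃ v : Set (Fin 3 → ℝ),
        v = {y : Fin 3 → ℝ | ρ / 2 < (y 0) ^ 2 + (y 1) ^ 2} ∩ Metric.ball 0 (R' + 1) := ⟨_, rfl⟩
      have hVopen : IsOpen V := by
        rw [hVdef]; exact (isOpen_lt continuous_const hrsqcont).inter Metric.isOpen_ball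
      have hVΓ : V ⊆ Γᶜ := by
        intro y hy hyΓ
        rw [hVdef] at hy
        obtain ⟨h0, h1⟩ := hΓaxis hyΓ
        have h2 := hy.1
        simp only [Set.mem_setOf_eq, h0, h1] at h2
        norm_num at h2
        linarith
      have hVrsq : ∀ y ∈ V, 0 < (y 0) ^ 2 + (y 1) ^ 2 := by
        intro y hy
        rw [hVdef] at hy
        exact lt_trans (half_pos hρpos) hy.1
      obtain ⟨b, hbdef⟩ : ∃ f : (Fin 3 → ℝ) → ℝ, f = fun y =>
        Real.log (4 * R' ^ 2) / 2 - Real.log ((y 0) ^ 2 + (y 1) ^ 2) / 2 := ⟨_, rfl⟩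
      obtain ⟨q, hqdef⟩ : ∃ f : (Fin 3 → ℝ) → ℝ,
        f = fun y => (y 0) ^ 2 + (y 1) ^ 2 + (y 2) ^ 2 := ⟨_, rfl⟩
      obtain ⟨u, hudef⟩ : ∃ f : (Fin 3 → ℝ) → ℝ,
        f = fun y => (φ y + (-δ) * b y) + η * q y := ⟨_, rfl⟩
      have hφV : ContDiffOn ℝ 2 φ V := hφ.mono hVΓ
      have hrsqCD : ContDiff ℝ 2 (fun y : Fin 3 → ℝ => (y 0) ^ 2 + (y 1) ^ 2) :=
        ((contDiff_apply ℝ ℝ (0 : Fin 3)).pow 2).add ((contDiff_apply ℝ ℝ (1 : Fin 3)).pow 2)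
      have hbV : ContDiffOn ℝ 2 b V := by
        rw [hbdef]
        apply ContDiffOn.sub contDiffOn_const
        exact ((hrsqCD.contDiffOn.log (fun y hy => ne_of_gt (hVrsq y hy))).div_const 2)
      have hqCD : ContDiff ℝ 2 q := by
        rw [hqdef]
        exact hrsqCD.add ((contDiff_apply ℝ ℝ (2 : Fin 3)).pow 2)
      have hfb : ContDiffOn ℝ 2 (fun y => φ y + (-δ) * b y) V :=
        hφV.add (contDiffOn_const.mul hbV)
      have huV : ContDiffOn ℝ 2 u V := by
        rw [hudef]
        exact hfb.add (contDiffOn_const.mul hqCD.contDiffOn)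
      obtain ⟨Ω, hΩdef⟩ : ∃ s : Set (Fin 3 → ℝ),
        s = Metric.ball 0 R' ∩ {y : Fin 3 → ℝ | ρ < (y 0) ^ 2 + (y 1) ^ 2} := ⟨_, rfl⟩
      have hΩopen : IsOpen Ω := by
        rw [hΩdef]; exact Metric.isOpen_ball.inter (isOpen_lt continuous_const hrsqcont)
      have hx₀Ω : x₀ ∈ Ω := by
        rw [hΩdef]; exact ⟨mem_ball_zero_iff.mpr hx₀R', hρx₀⟩
      have hclosΩ : closure Ω ⊆ Metric.closedBall 0 R' ∩ {y | ρ ≤ (y 0) ^ 2 + (y 1) ^ 2} := by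
        apply closure_minimal
        · intro y hy
          rw [hΩdef] at hy
          have hy2 : ρ < (y 0) ^ 2 + (y 1) ^ 2 := hy.2
          exact ⟨Metric.ball_subset_closedBall hy.1, le_of_lt hy2⟩
        · exact Metric.isClosed_closedBall.inter (isClosed_le continuous_const hrsqcont)
      have hclosV : closure Ω ⊆ V := by
        intro y hy
        obtain ⟨h1, h2⟩ := hclosΩ hy
        have h2' : ρ ≤ (y 0) ^ 2 + (y 1) ^ 2 := h2
        rw [hVdef]
        refine ⟨lt_of_lt_of_le (by linarith) h2', ?_⟩
        have := mem_closedBall_zero_iff.mp h1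
        exact mem_ball_zero_iff.mpr (by linarith)
      have hcomp : IsCompact (closure Ω) :=
        (isCompact_closedBall (0 : Fin 3 → ℝ) R').of_isClosed_subset isClosed_closure
          (hclosΩ.trans Set.inter_subset_left)
      obtain ⟨z, hzc, hzmax⟩ := hcomp.exists_isMaxOn ⟨x₀, subset_closure hx₀Ω⟩
        (huV.continuousOn.mono hclosV)
      have hzV : z ∈ V := hclosV hzc
      have hzΓ : z ∉ Γ := hVΓ hzV
      have hzrsq : 0 < (z 0) ^ 2 + (z 1) ^ 2 := hVrsq z hzV
      have hzΩ : z ∉ Ω := by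
        intro hz
        have hloc : IsLocalMax u z :=
          hzmax.isLocalMax (Filter.mem_of_superset (hΩopen.mem_nhds hz) subset_closure)
        have hlap : laplacian3 u z ≤ 0 :=
          laplacian3_nonpos_of_isLocalMax hVopen hzV huV hloc
        have h1 : laplacian3 u z
            = laplacian3 (fun y => φ y + (-δ) * b y) z + η * laplacian3 q z := by
          rw [hudef]
          exact laplacian3_add_smul hVopen hzV hfb hqCD.contDiffOn η
        have h2 : laplacian3 (fun y => φ y + (-δ) * b y) z
            = laplacian3 φ z + (-δ) * laplacian3 b z :=
          laplacian3_add_smul hVopen hzV hφV hbV (-δ)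
        have h3 : laplacian3 b z = 0 := by
          rw [hbdef]
          exact laplacian3_logbarrier _ z hzrsq
        have h4 : laplacian3 q z = 6 := by
          rw [hqdef]
          exact laplacian3_q z
        have h5 := hsub z hzΓ
        rw [h1, h2, h3, h4] at hlap
        linarith [h5, hηpos]
      have hzbd := hclosΩ hzc
      have hznorm : ‖z‖ ≤ R' := mem_closedBall_zero_iff.mp hzbd.1
      have hzρ : ρ ≤ (z 0) ^ 2 + (z 1) ^ 2 := hzbd.2
      have hco : ∀ i : Fin 3, (z i) ^ 2 ≤ R' ^ 2 := by
        intro i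
        have h := (norm_le_pi_norm z i).trans hznorm
        rw [Real.norm_eq_abs] at h
        nlinarith [abs_nonneg (z i), sq_abs (z i)]
      have hqz : q z ≤ 3 * R' ^ 2 := by
        have k0 := hco 0; have k1 := hco 1; have k2 := hco 2
        rw [hqdef]
        dsimp only
        linarith
      have hqznn : 0 ≤ q z := by
        rw [hqdef]; dsimp only; positivity
      have hηq : η * q z ≤ ε := by
        have h1 : η * q z ≤ η * (3 * R' ^ 2 + 1) :=
          mul_le_mul_of_nonneg_left (by linarith) hηpos.le
        have h2 : η * (3 * R' ^ 2 + 1) = ε := by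
          rw [hηdef]; field_simp
        linarith
      have hbz0 : 0 ≤ b z := by
        rw [hbdef]; dsimp only
        have h2R : (z 0) ^ 2 + (z 1) ^ 2 ≤ 4 * R' ^ 2 := by
          have k0 := hco 0; have k1 := hco 1; nlinarith
        have := Real.log_le_log hzrsq h2R
        linarith
      have huz : u z ≤ 2 * ε := by
        have hnot : ¬(z ∈ Metric.ball (0 : Fin 3 → ℝ) R' ∧ ρ < (z 0) ^ 2 + (z 1) ^ 2) := by
          intro hcon
          exact hzΩ (by rw [hΩdef]; exact ⟨hcon.1, hcon.2⟩)
        rw [hudef]; dsimp only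
        rcases not_and_or.mp hnot with hcase | hcase
        · have hnz : R' ≤ ‖z‖ :=
            le_of_not_gt (fun h => hcase (mem_ball_zero_iff.mpr h))
          have hφz : φ z ≤ ε := hR z hzΓ (lt_of_lt_of_le hRR' hnz)
          have hδb : (-δ) * b z ≤ 0 := mul_nonpos_of_nonpos_of_nonneg (by linarith) hbz0
          linarith [hφz, hδb, hηq]
        · have hrle : (z 0) ^ 2 + (z 1) ^ 2 ≤ ρ := le_of_not_gt hcase
          have h1 : (z 0) ^ 2 + (z 1) ^ 2 ≤ 4 * R' ^ 2 * Real.exp (-(2 * X)) := by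
            rw [hρdef] at hrle
            exact hrle.trans (min_le_right _ _)
          have h2 := Real.log_le_log hzrsq h1
          rw [Real.log_mul (ne_of_gt hR'sq) (Real.exp_ne_zero _), Real.log_exp] at h2
          have hbig : X ≤ b z := by
            rw [hbdef]; dsimp only
            linarith
          have hδX : δ * X = |B| + 1 := by
            rw [hXdef, mul_comm, div_mul_cancel₀ _ (ne_of_gt hδpos)]
          have h4 : δ * X ≤ δ * b z := mul_le_mul_of_nonneg_left hbig hδpos.le
          rw [hδX] at h4
          have hφz : φ z ≤ B := hB z hzΓ
          have hBabs : B ≤ |B| := le_abs_self B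
          linarith [hφz, hBabs, h4, hηq, hε]
      have hux₀ : u x₀ ≤ 2 * ε := le_trans (hzmax (subset_closure hx₀Ω)) huz
      have hbx₀ : b x₀ = L₀ := by rw [hbdef, hL₀]
      have hδL : δ * b x₀ ≤ ε := by
        rw [hbx₀]
        have h1 : δ * |L₀| ≤ ε := by
          rw [hδdef, div_mul_eq_mul_div, div_le_iff₀ (by positivity)]
          have h3 := mul_le_mul_of_nonneg_left (by linarith : |L₀| ≤ |L₀| + 1) hε.le
          linarith
        have h2 : δ * L₀ ≤ δ * |L₀| := mul_le_mul_of_nonneg_left (le_abs_self L₀) hδpos.le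
        linarith
      have hηq₀ : 0 ≤ η * q x₀ := by
        have h1 : 0 ≤ q x₀ := by rw [hqdef]; dsimp only; positivity
        positivity
      have heq : φ x₀ = u x₀ - (-δ) * b x₀ - η * q x₀ := by
        rw [hudef]; dsimp only; ring
      rw [heq]
      linarith [hux₀, hδL, hηq₀]
    by_contra hc
    push_neg at hc
    have := key (φ x₀ / 4) (by linarith)
    linarith
  intro x₀ hx₀
  by_cases hrsq : 0 < (x₀ 0) ^ 2 + (x₀ 1) ^ 2
  · exact main x₀ hx₀ hrsq
  · by_contra hc
    push_neg at hc
    have hopen : IsOpen Γᶜ := hΓclosed.isOpen_compl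
    have hcont : ContinuousAt φ x₀ :=
      hφ.continuousOn.continuousAt (hopen.mem_nhds hx₀)
    have hev : ∀ᶠ y in 𝓝 x₀, 0 < φ y := hcont.eventually (eventually_gt_nhds hc)
    rcases Metric.eventually_nhds_iff.mp hev with ⟨d, hd, hdball⟩
    have hle0 : (x₀ 0) ^ 2 + (x₀ 1) ^ 2 ≤ 0 := le_of_not_gt hrsq
    have h0sq : (x₀ 0) ^ 2 = 0 := le_antisymm (by nlinarith [sq_nonneg (x₀ 1)]) (sq_nonneg _)
    have h1sq : (x₀ 1) ^ 2 = 0 := le_antisymm (by nlinarith [sq_nonneg (x₀ 0)]) (sq_nonneg _)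
    have h0 : x₀ 0 = 0 := by
      exact pow_eq_zero_iff two_ne_zero |>.mp h0sq
    have h1 : x₀ 1 = 0 := by
      exact pow_eq_zero_iff two_ne_zero |>.mp h1sq
    obtain ⟨y, hydef⟩ : ∃ y : Fin 3 → ℝ, y = Function.update x₀ 0 (d / 2) := ⟨_, rfl⟩
    have hy0 : y 0 = d / 2 := by simp [hydef]
    have hy1 : y 1 = x₀ 1 := by
      simp [hydef, Function.update_apply, show (1 : Fin 3) ≠ 0 by decide]
    have hyrsq : 0 < (y 0) ^ 2 + (y 1) ^ 2 := by
      rw [hy0, hy1, h1]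
      positivity
    have hyΓ : y ∉ Γ := by
      intro hyΓ
      have := (hΓaxis hyΓ).1
      rw [hy0] at this
      linarith
    have hdist : dist y x₀ < d := by
      rw [dist_pi_lt_iff hd]
      intro i
      by_cases hi : i = 0
      · subst hi
        rw [hy0, h0, Real.dist_eq, sub_zero, abs_of_pos (by linarith)]
        linarith
      · have hyi : y i = x₀ i := by simp [hydef, Function.update_apply, hi]
        rw [hyi, dist_self]
        exact hd
    have hpos := hdball hdist
    have hneg := main y hyΓ hyrsq
    linarith
end
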